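/- For every odd integer n ≥ 3, the independence number of the prime-coprime graph of the dicyclic group Q_{4n} of order 4n equals 2n. -/

import Mathlib

/-!
The elements `xa j` are the `2n` elements of order `4`, and `gcd 4 4 = 4` is neither `1` nor a
prime, so they form an independent set. Since `n` is odd, every `a i` has order dividing `2n`,
hence not divisible by `4`, so its gcd with `4` is `1` or `2`: every `a i` is adjacent to every
`xa j`. An independent set therefore lies entirely among the `a i` or among the `xa j`, and both
families have `2n` elements.
-/

/-- The prime-coprime graph: distinct vertices `g, h` are adjacent iff
`gcd (orderOf g) (orderOf h)` is `1` or a prime. -/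
def primeCoprimeGraph (G : Type*) [Monoid G] : SimpleGraph G where
  Adj g h := g ≠ h ∧
    (Nat.gcd (orderOf g) (orderOf h) = 1 ∨ (Nat.gcd (orderOf g) (orderOf h)).Prime)
  symm := by
    constructor
    rintro g h ⟨hne, hd⟩
    exact ⟨hne.symm, by rwa [Nat.gcd_comm]⟩
  loopless := by constructor; rintro g ⟨hne, -⟩; exact hne rfl

/-- A set of vertices is independent if no two of its elements are adjacent. -/
def IsIndepSet {V : Type*} (Γ : SimpleGraph V) (s : Set V) : Prop :=
  s.Pairwise fun a b => ¬ Γ.Adj a b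

open scoped Classical in
/-- The independence number of a graph on a finite vertex set. -/
noncomputable def indepNum {V : Type*} [Fintype V] (Γ : SimpleGraph V) : ℕ :=
  Finset.univ.sup fun s : Finset V => if IsIndepSet Γ (s : Set V) then s.card else 0

/-- A graph is split if its vertex set can be partitioned into two disjoint nonempty
subsets, one a clique and the other an independent set. -/
def IsSplit {V : Type*} (Γ : SimpleGraph V) : Prop :=
  ∃ K I : Set V, K.Nonempty ∧ I.Nonempty ∧ Disjoint K I ∧ K ∪ I = Set.univ ∧
    Γ.IsClique K ∧ IsIndepSet Γ I

section IndepNum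

variable {V : Type*} {Γ : SimpleGraph V}

theorem IsIndepSet.card_le_indepNum [Fintype V] {s : Finset V} (hs : IsIndepSet Γ s) :
    s.card ≤ indepNum Γ := by
  classical
  unfold indepNum
  have := Finset.le_sup (f := fun t : Finset V => if IsIndepSet Γ t then t.card else 0)
    (Finset.mem_univ s)
  simpa [hs] using this

theorem indepNum_le [Fintype V] {k : ℕ} (h : ∀ s : Finset V, IsIndepSet Γ s → s.card ≤ k) :
    indepNum Γ ≤ k := by
  classical
  unfold indepNum
  refine Finset.sup_le fun s _ => ?_
  split_ifs with hs
  exacts [h s hs, k.zero_le]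

theorem IsIndepSet.subset_or_subset {s A B : Set V} (hs : IsIndepSet Γ s) (hsAB : s ⊆ A ∪ B)
    (hAB : ∀ a ∈ A, ∀ b ∈ B, Γ.Adj a b) : s ⊆ A ∨ s ⊆ B := by
  refine or_iff_not_imp_left.2 fun hsA y hys => ?_
  obtain ⟨x, hxs, hxA⟩ := Set.not_subset.1 hsA
  by_contra hyB
  have hxB : x ∈ B := (hsAB hxs).resolve_left hxA
  have hyA : y ∈ A := (hsAB hys).resolve_right hyB
  have hyx := hAB y hyA x hxB
  exact hs hys hxs hyx.ne hyx

end IndepNum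

section PrimeCoprimeGraph

variable {G : Type*} [Monoid G]

theorem primeCoprimeGraph_not_adj_of_orderOf_eq {g h : G} {m : ℕ} (hg : orderOf g = m)
    (hh : orderOf h = m) (hm : m ≠ 1) (hm' : ¬ m.Prime) : ¬ (primeCoprimeGraph G).Adj g h := by
  rintro ⟨-, hgcd⟩
  rw [hg, hh, Nat.gcd_self] at hgcd
  exact hgcd.elim hm hm'

theorem primeCoprimeGraph_adj_of_orderOf_eq_four {g h : G} (hgh : g ≠ h)
    (hg : ¬ 4 ∣ orderOf g) (hh : orderOf h = 4) : (primeCoprimeGraph G).Adj g h := by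
  refine ⟨hgh, ?_⟩
  rw [hh]
  obtain ⟨k, hk, hk4⟩ := (Nat.dvd_prime_pow Nat.prime_two).1
    (show Nat.gcd (orderOf g) 4 ∣ 2 ^ 2 from Nat.gcd_dvd_right _ _)
  interval_cases k
  · exact Or.inl hk4
  · exact Or.inr (hk4 ▸ Nat.prime_two)
  · norm_num at hk4
    exact absurd (hk4 ▸ Nat.gcd_dvd_left (orderOf g) 4) hg

end PrimeCoprimeGraph

namespace QuaternionGroup

variable {n : ℕ} [NeZero n]

theorem orderOf_a_dvd (i : ZMod (2 * n)) : orderOf (a i) ∣ 2 * n := by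
  rw [orderOf_a]
  exact Nat.div_dvd_of_dvd (Nat.gcd_dvd_left _ _)

theorem isIndepSet_range_xa :
    IsIndepSet (primeCoprimeGraph (QuaternionGroup n)) (Set.range xa) := by
  rintro _ ⟨i, rfl⟩ _ ⟨j, rfl⟩ -
  exact primeCoprimeGraph_not_adj_of_orderOf_eq (orderOf_xa i) (orderOf_xa j) (by norm_num)
    (by norm_num)

theorem primeCoprimeGraph_adj_a_xa (hodd : Odd n) (i j : ZMod (2 * n)) :
    (primeCoprimeGraph (QuaternionGroup n)).Adj (a i) (xa j) := by
  refine primeCoprimeGraph_adj_of_orderOf_eq_four (by simp) (fun h4 => ?_) (orderOf_xa j)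
  obtain ⟨k, hk⟩ := h4.trans (orderOf_a_dvd i)
  obtain ⟨m, hm⟩ := hodd
  omega

end QuaternionGroup

open QuaternionGroup in
theorem indepNum_dicyclic_odd_general (n : ℕ) [NeZero n] (hodd : Odd n) :
    indepNum (primeCoprimeGraph (QuaternionGroup n)) = 2 * n := by
  set A : Finset (QuaternionGroup n) := Finset.univ.image a
  set B : Finset (QuaternionGroup n) := Finset.univ.image xa
  have hA : A.card ≤ 2 * n := Finset.card_image_le.trans_eq (ZMod.card _)
  have hB : B.card = 2 * n :=
    (Finset.card_image_of_injective _ fun i j h => xa.inj h).trans (ZMod.card _)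
  refine le_antisymm (indepNum_le fun s hs => ?_) ?_
  · have hcover : (s : Set (QuaternionGroup n)) ⊆ ↑A ∪ ↑B := by
      rintro (i | j) - <;> simp [A, B]
    have hAB : ∀ x ∈ (A : Set (QuaternionGroup n)), ∀ y ∈ (B : Set _),
        (primeCoprimeGraph (QuaternionGroup n)).Adj x y := by
      simp only [A, B, Finset.coe_image, Finset.coe_univ, Set.image_univ, Set.forall_mem_range]
      exact primeCoprimeGraph_adj_a_xa hodd
    rcases hs.subset_or_subset hcover hAB with h | h
    · exact (Finset.card_le_card (Finset.coe_subset.1 h)).trans hA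
    · exact (Finset.card_le_card (Finset.coe_subset.1 h)).trans hB.le
  · rw [← hB]
    exact IsIndepSet.card_le_indepNum (by simpa [B] using isIndepSet_range_xa)

theorem indepNum_dicyclic_odd (n : ℕ) [NeZero n] (hn : 3 ≤ n) (hodd : Odd n) :
    indepNum (primeCoprimeGraph (QuaternionGroup n)) = 2 * n :=
  indepNum_dicyclic_odd_general n hodd
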